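/- For every positive integer r and every finite simple graph H, there exists a constant c = c(r,H) > 0 such that for every H-minor-free graph G, there exists a collection C of r-element subsets of E(G) with |C| ≤ c·|V(G)| such that for every subgraph R of G of minimum degree at least r, some member of C is a subset of E(R). -/

import Mathlib

open Filter

noncomputable section

/-- `G` has a nonempty subgraph of minimum degree at least `r`. -/
def HasSubMinDeg {V : Type} (G : SimpleGraph V) (r : ℕ) : Prop :=
  ∃ R : G.Subgraph, R.verts.Nonempty ∧ ∀ v ∈ R.verts, r ≤ (R.neighborSet v).ncard

/-- `G` is `d`-degenerate: it has no subgraph of minimum degree at least `d+1`. -/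
def IsDegen {V : Type} (G : SimpleGraph V) (d : ℕ) : Prop :=
  ¬ HasSubMinDeg G (d + 1)

/-- `G` has a nonempty `r`-regular subgraph. -/
def HasRegSub {V : Type} (G : SimpleGraph V) (r : ℕ) : Prop :=
  ∃ R : G.Subgraph, R.verts.Nonempty ∧ ∀ v ∈ R.verts, (R.neighborSet v).ncard = r

/-- `G` is `r`-choosable. -/
def Choosable {V : Type} (G : SimpleGraph V) (r : ℕ) : Prop :=
  ∀ L : V → Finset ℕ, (∀ v, r ≤ (L v).card) →
    ∃ c : V → ℕ, (∀ v, c v ∈ L v) ∧ ∀ ⦃u w⦄, G.Adj u w → c u ≠ c w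

/-- `H` is a minor of `G`: there are disjoint nonempty connected branch sets,
one for each vertex of `H`, with edges of `H` realized by edges of `G`. -/
def IsMinorOf {W V : Type} (H : SimpleGraph W) (G : SimpleGraph V) : Prop :=
  ∃ B : W → Set V,
    (∀ w, (B w).Nonempty) ∧
    (∀ ⦃w w'⦄, w ≠ w' → Disjoint (B w) (B w')) ∧
    (∀ w, (G.induce (B w)).Connected) ∧
    ∀ ⦃w w'⦄, H.Adj w w' → ∃ u ∈ B w, ∃ x ∈ B w', G.Adj u x

/-- `G` contains a subgraph isomorphic to `H`. -/
def IsSubCopyOf {W V : Type} (H : SimpleGraph W) (G : SimpleGraph V) : Prop :=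
  ∃ f : W ↪ V, ∀ ⦃a b⦄, H.Adj a b → G.Adj (f a) (f b)

/-- The join `G ∨ H` of two graphs. -/
def gJoin {V W : Type} (G : SimpleGraph V) (H : SimpleGraph W) : SimpleGraph (V ⊕ W) where
  Adj x y :=
    match x, y with
    | Sum.inl a, Sum.inl b => G.Adj a b
    | Sum.inr a, Sum.inr b => H.Adj a b
    | Sum.inl _, Sum.inr _ => True
    | Sum.inr _, Sum.inl _ => True
  symm := by
    constructor
    rintro (a | a) (b | b) h
    · exact h.symm
    · trivial
    · trivial
    · exact h.symm
  loopless := by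
    constructor
    rintro (a | a) h
    · exact h.ne rfl
    · exact h.ne rfl

/-- The disjoint union `tG` of `t` copies of `G`. -/
def gCopies {V : Type} (t : ℕ) (G : SimpleGraph V) : SimpleGraph (Fin t × V) where
  Adj x y := x.1 = y.1 ∧ G.Adj x.2 y.2
  symm := by
    constructor
    rintro x y ⟨h1, h2⟩
    exact ⟨h1.symm, h2.symm⟩
  loopless := by
    constructor
    rintro x ⟨-, h⟩
    exact h.ne rfl

/-- The graph `G ∧_k Z`, obtained from `k` disjoint copies of `G` by identifying
the `k` copies of each vertex of `Z`. -/
def wedgePow {V : Type} (G : SimpleGraph V) (Z : Set V) (k : ℕ) :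
    SimpleGraph (↥Z ⊕ (Fin k × ↥(Zᶜ : Set V))) where
  Adj x y :=
    match x, y with
    | Sum.inl z, Sum.inl z' => G.Adj z.1 z'.1
    | Sum.inl z, Sum.inr p => G.Adj z.1 p.2.1
    | Sum.inr p, Sum.inl z => G.Adj p.2.1 z.1
    | Sum.inr p, Sum.inr q => p.1 = q.1 ∧ G.Adj p.2.1 q.2.1
  symm := by
    constructor
    rintro (z | p) (z' | q) h
    · exact h.symm
    · exact h.symm
    · exact h.symm
    · exact ⟨h.1.symm, h.2.symm⟩
  loopless := by
    constructor
    rintro (z | p) h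
    · exact h.ne rfl
    · exact h.2.ne rfl

/-- `G` is (isomorphic to) the graph obtained from `W` by adding isolated vertices. -/
def ExtIsolated {VW V : Type} (W : SimpleGraph VW) (G : SimpleGraph V) : Prop :=
  ∃ f : VW ↪ V, (∀ a b, G.Adj (f a) (f b) ↔ W.Adj a b) ∧
    ∀ x y, G.Adj x y → ∃ a b, f a = x ∧ f b = y

/-- Membership in the family `𝓕(G, F₀, r)`: `F` is obtained from the disjoint union of `G`
and `F₀` by adding edges between the two sides so that every vertex of `F₀` has degree
at least `r`. -/
def InFamF {V W : Type} (G : SimpleGraph V) (F0 : SimpleGraph W) (r : ℕ)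
    (F : SimpleGraph (V ⊕ W)) : Prop :=
  (∀ a b, F.Adj (Sum.inl a) (Sum.inl b) ↔ G.Adj a b) ∧
  (∀ a b, F.Adj (Sum.inr a) (Sum.inr b) ↔ F0.Adj a b) ∧
  ∀ w : W, r ≤ (F.neighborSet (Sum.inr w)).ncard

/-- The type of `F ∈ 𝓕(G, F₀, r)`: the number of edges incident with the `F₀`-side. -/
def typeOfF {V W : Type} (F : SimpleGraph (V ⊕ W)) : ℕ :=
  {e ∈ F.edgeSet | ∃ w : W, (Sum.inr w : V ⊕ W) ∈ e}.ncard

/-- The minimum size of a vertex cover of `H`. -/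
def vcNum {V : Type} [Fintype V] (H : SimpleGraph V) : ℕ :=
  sInf {k | ∃ S : Finset V, S.card = k ∧ ∀ ⦃a b⦄, H.Adj a b → a ∈ S ∨ b ∈ S}

/-- `H` has minimum degree at least `r`. -/
def MinDegGE {V : Type} (H : SimpleGraph V) (r : ℕ) : Prop :=
  ∀ v, r ≤ (H.neighborSet v).ncard

open Classical in
/-- The probability that the random subgraph `G(p)` (each edge kept independently with
probability `p`) satisfies the property `P`. -/
def edgeProb {n : ℕ} (G : SimpleGraph (Fin n)) (p : ℝ)
    (P : SimpleGraph (Fin n) → Prop) : ℝ :=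
  ∑ S ∈ (Set.toFinite G.edgeSet).toFinset.powerset,
    if P (SimpleGraph.fromEdgeSet (S : Set (Sym2 (Fin n)))) then
      p ^ S.card * (1 - p) ^ ((Set.toFinite G.edgeSet).toFinset.card - S.card)
    else 0

/-- Condition (1) of the upper-threshold definition. -/
def CondOne (𝒢 : ∀ n : ℕ, Set (SimpleGraph (Fin n)))
    (P : ∀ n : ℕ, SimpleGraph (Fin n) → Prop) (pstar : ℕ → ℝ) : Prop :=
  ∀ G : (n : ℕ) → SimpleGraph (Fin n), (∀ n, G n ∈ 𝒢 n) →
    ∀ q : ℕ → ℝ, (∀ n, q n ∈ Set.Icc (0 : ℝ) 1) →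
      Tendsto (fun n => pstar n / q n) atTop atTop →
      Tendsto (fun n => edgeProb (G n) (q n) (P n)) atTop (nhds 1)

/-- Condition (2) of the upper-threshold definition. -/
def CondTwo (𝒢 : ∀ n : ℕ, Set (SimpleGraph (Fin n)))
    (P : ∀ n : ℕ, SimpleGraph (Fin n) → Prop) (pstar : ℕ → ℝ) : Prop :=
  ∃ G : (n : ℕ) → SimpleGraph (Fin n), (∀ n, G n ∈ 𝒢 n) ∧
    ∀ q : ℕ → ℝ, (∀ n, q n ∈ Set.Icc (0 : ℝ) 1) →
      Tendsto (fun n => q n / pstar n) atTop atTop →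
      Tendsto (fun n => edgeProb (G n) (q n) (P n)) atTop (nhds 0)

/-- `pstar` is an upper threshold for the class `𝒢` and the property `P`. -/
def IsUpperThreshold (𝒢 : ∀ n : ℕ, Set (SimpleGraph (Fin n)))
    (P : ∀ n : ℕ, SimpleGraph (Fin n) → Prop) (pstar : ℕ → ℝ) : Prop :=
  CondOne 𝒢 P pstar ∧ CondTwo 𝒢 P pstar

/-- The class of `H`-minor-free graphs (on vertex sets `Fin n`). -/
def MClass {W : Type} (H : SimpleGraph W) (n : ℕ) : Set (SimpleGraph (Fin n)) :=
  {G | ¬ IsMinorOf H G}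

/-- A `(c,q,r)`-good signature collection for `G`. -/
def GoodSig {V : Type} [Fintype V] (G : SimpleGraph V) (c : ℝ) (q r : ℕ)
    (C : Finset (Finset (Sym2 V))) : Prop :=
  (∀ S ∈ C, S.card = q ∧ (S : Set (Sym2 V)) ⊆ G.edgeSet) ∧
  (C.card : ℝ) ≤ c * (Fintype.card V : ℝ) ∧
  ∀ R : G.Subgraph, R.verts.Nonempty → (∀ v ∈ R.verts, r ≤ (R.neighborSet v).ncard) →
    ∃ S ∈ C, (S : Set (Sym2 V)) ⊆ R.edgeSet

/-- The class `𝒢` has `(q,r)`-good signature collections. -/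
def HasGoodSigs (𝒢 : ∀ n : ℕ, Set (SimpleGraph (Fin n))) (q r : ℕ) : Prop :=
  ∃ c : ℝ, ∀ n : ℕ, ∀ G ∈ 𝒢 n, ∃ C, GoodSig G c q r C

/-- The neighborhood `N_G(S)` of a set of vertices. -/
def setNbhd {V : Type} (G : SimpleGraph V) (S : Set V) : Set V :=
  {v | v ∉ S ∧ ∃ u ∈ S, G.Adj u v}

/-- The average degree `2|E(G)|/|V(G)|` of a finite graph. -/
def avgDeg {V : Type} [Fintype V] (G : SimpleGraph V) : ℝ :=
  2 * (G.edgeSet.ncard : ℝ) / (Fintype.card V : ℝ)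

/-- `N_{G[X]}^{≤ m}[x]`: the vertices reachable from `x` by a walk of length at most `m`
all of whose vertices lie in `X`. -/
def ballIn {V : Type} (G : SimpleGraph V) (X : Set V) (x : V) (m : ℤ) : Set V :=
  {y | ∃ w : G.Walk x y, (∀ z ∈ w.support, z ∈ X) ∧ (w.length : ℤ) ≤ m}

/-- `G` contains a subgraph isomorphic to an `S`-subdivision of `H`, where `S` is the
set of allowed numbers of subdivisions per edge. -/
def ContainsSubdiv {VH V : Type} (G : SimpleGraph V) (H : SimpleGraph VH)
    (S : ℕ → Prop) : Prop :=
  ∃ (f : VH ↪ V) (P : ∀ ⦃a b⦄, H.Adj a b → G.Walk (f a) (f b)),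
    (∀ ⦃a b⦄ (h : H.Adj a b), (P h).IsPath) ∧
    (∀ ⦃a b⦄ (h : H.Adj a b), 1 ≤ (P h).length ∧ S ((P h).length - 1)) ∧
    (∀ ⦃a b⦄ (h : H.Adj a b), ∀ c : VH, f c ∈ (P h).support → c = a ∨ c = b) ∧
    ∀ ⦃a b a' b'⦄ (h : H.Adj a b) (h' : H.Adj a' b'), s(a, b) ≠ s(a', b') →
      ∀ x, x ∈ (P h).support → x ∈ (P h').support →
        (x = f a ∨ x = f b) ∧ (x = f a' ∨ x = f b')

/-- `H` is an `ℓ`-shallow minor of `G`: a minor all of whose branch sets have radius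
at most `ℓ`. -/
def IsShallowMinorOf {W V : Type} (H : SimpleGraph W) (G : SimpleGraph V)
    (ℓ : WithTop ℤ) : Prop :=
  ∃ B : W → Set V,
    (∀ w, (B w).Nonempty) ∧
    (∀ ⦃w w'⦄, w ≠ w' → Disjoint (B w) (B w')) ∧
    (∀ w, (G.induce (B w)).Connected) ∧
    (∀ w, ∃ v : B w, ∀ u : B w, (((G.induce (B w)).dist v u : ℤ) : WithTop ℤ) ≤ ℓ) ∧
    ∀ ⦃w w'⦄, H.Adj w w' → ∃ u ∈ B w, ∃ x ∈ B w', G.Adj u x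

end

/-! Mader's argument: a graph with at least one edge and at least `2 ^ h * |V|` edges has a
`K_h` minor. Either some edge lies in fewer than `2 ^ h` triangles, and contracting it keeps the
edge density, or every neighbourhood `G[N(x)]` has minimum degree `2 ^ h` and hence contains a
`K_(h-1)` minor, which `x` extends to `K_h`. So every `H`-minor-free graph is
`d`-degenerate with `d = 2 ^ (|H| + 1)`. Repeatedly removing a vertex `x` of degree at most `d`
in what remains and recording every `r`-star at `x` into the remaining vertices gives at most
`(d choose r)` edge sets per vertex: a subgraph of minimum degree `r` either contains the current
`x`, and with it one of these stars, or lives entirely in the rest. -/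

open Finset SimpleGraph

section MinorModels

variable {U W V : Type}

def IsMinorModel (K : SimpleGraph W) (G : SimpleGraph V) (B : W → Set V) : Prop :=
  (∀ w, (B w).Nonempty) ∧
    (∀ ⦃w w'⦄, w ≠ w' → Disjoint (B w) (B w')) ∧
    (∀ w, (G.induce (B w)).Connected) ∧
    ∀ ⦃w w'⦄, K.Adj w w' → ∃ u ∈ B w, ∃ x ∈ B w', G.Adj u x

theorem SimpleGraph.connected_induce_biUnion {G' : SimpleGraph W} {G : SimpleGraph V}
    {T : Set W} {φ : W → Set V} (hT : (G'.induce T).Connected)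
    (hφ : ∀ w ∈ T, (G.induce (φ w)).Connected)
    (hadj : ∀ w ∈ T, ∀ w' ∈ T, G'.Adj w w' → ∃ u ∈ φ w, ∃ u' ∈ φ w', G.Adj u u') :
    (G.induce (⋃ w ∈ T, φ w)).Connected := by
  have hsub : ∀ w ∈ T, φ w ⊆ ⋃ w ∈ T, φ w := fun w hw => Set.subset_biUnion_of_mem hw
  have key : ∀ a b : T, (G'.induce T).Reachable a b → ∀ u (hu : u ∈ φ a) u' (hu' : u' ∈ φ b),
      (G.induce (⋃ w ∈ T, φ w)).Reachable ⟨u, hsub a a.2 hu⟩ ⟨u', hsub b b.2 hu'⟩ := by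
    rintro a b ⟨p⟩
    induction p with
    | @nil a =>
      intro u hu u' hu'
      exact ((hφ _ a.2).preconnected ⟨u, hu⟩ ⟨u', hu'⟩).map (G.induceHomOfLE (hsub _ a.2)).toHom
    | @cons a c b hac _ ih =>
      intro u hu u' hu'
      obtain ⟨x, hx, y, hy, hxy⟩ := hadj a a.2 c c.2 hac
      have hux : (G.induce (φ a)).Reachable ⟨u, hu⟩ ⟨x, hx⟩ := (hφ _ a.2).preconnected _ _
      exact (hux.map (G.induceHomOfLE (hsub _ a.2)).toHom).trans
        ((Adj.reachable (G := G.induce _) (u := ⟨x, hsub _ a.2 hx⟩) (v := ⟨y, hsub _ c.2 hy⟩)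
          hxy).trans (ih y hy u' hu'))
  obtain ⟨w₀⟩ := hT.nonempty
  obtain ⟨u₀, hu₀⟩ := (hφ _ w₀.2).nonempty
  rw [connected_iff_exists_forall_reachable]
  refine ⟨⟨u₀, hsub _ w₀.2 hu₀⟩, fun ⟨u, hu⟩ => ?_⟩
  obtain ⟨w, hw, huw⟩ := Set.mem_iUnion₂.1 hu
  exact key w₀ ⟨w, hw⟩ (hT.preconnected _ _) _ hu₀ u huw

theorem IsMinorModel.comp {K : SimpleGraph U} {G' : SimpleGraph W} {G : SimpleGraph V}
    {B : U → Set W} {φ : W → Set V} (hB : IsMinorModel K G' B) (hφ : IsMinorModel G' G φ) :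
    IsMinorModel K G (fun k => ⋃ w ∈ B k, φ w) := by
  obtain ⟨hBne, hBdisj, hBconn, hBadj⟩ := hB
  obtain ⟨hφne, hφdisj, hφconn, hφadj⟩ := hφ
  refine ⟨fun k => ?_, fun k k' hkk' => ?_, fun k => ?_, fun k k' hkk' => ?_⟩
  · obtain ⟨w, hw⟩ := hBne k
    exact (hφne w).mono (Set.subset_biUnion_of_mem hw)
  · simp only [Set.disjoint_iUnion_left, Set.disjoint_iUnion_right]
    rintro w hw w' hw'
    refine hφdisj fun h => ?_
    subst h
    exact Set.disjoint_left.1 (hBdisj hkk') hw' hw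
  · exact connected_induce_biUnion (hBconn k) (fun w _ => hφconn w) fun w _ w' _ h => hφadj h
  · obtain ⟨w, hw, w', hw', h⟩ := hBadj hkk'
    obtain ⟨u, hu, u', hu', huu'⟩ := hφadj h
    exact ⟨u, Set.mem_biUnion hw hu, u', Set.mem_biUnion hw' hu', huu'⟩

theorem IsMinorOf.trans {K : SimpleGraph U} {G' : SimpleGraph W} {G : SimpleGraph V}
    (hK : IsMinorOf K G') (hG' : IsMinorOf G' G) : IsMinorOf K G :=
  let ⟨_, hB⟩ := hK
  let ⟨_, hφ⟩ := hG'
  ⟨_, IsMinorModel.comp hB hφ⟩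

theorem IsMinorOf.of_isContained {H : SimpleGraph U} {K : SimpleGraph W} {G : SimpleGraph V}
    (hHK : H ⊑ K) (hK : IsMinorOf K G) : IsMinorOf H G := by
  obtain ⟨f⟩ := hHK
  obtain ⟨B, hne, hdisj, hconn, hadj⟩ := hK
  exact ⟨B ∘ f, fun _ => hne _, fun _ _ h => hdisj (f.injective.ne h), fun _ => hconn _,
    fun _ _ h => hadj (f.toHom.map_adj h)⟩

theorem IsMinorModel.cons_of_subset_neighborSet {k : ℕ} {G : SimpleGraph V}
    {B : Fin k → Set V} {x : V} (hB : IsMinorModel (⊤ : SimpleGraph (Fin k)) G B)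
    (hBx : ∀ i, B i ⊆ G.neighborSet x) :
    IsMinorModel (⊤ : SimpleGraph (Fin (k + 1))) G (Fin.cons {x} B : Fin (k + 1) → Set V) := by
  obtain ⟨hne, hdisj, hconn, hadj⟩ := hB
  have hxB : ∀ i, Disjoint {x} (B i) := fun i =>
    Set.disjoint_singleton_left.2 fun hx => G.notMem_neighborSet_self (hBx i hx)
  have hxadj : ∀ i, ∃ u ∈ ({x} : Set V), ∃ u' ∈ B i, G.Adj u u' := fun i =>
    let ⟨u, hu⟩ := hne i; ⟨x, rfl, u, hu, hBx i hu⟩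
  refine ⟨Fin.cases (Set.singleton_nonempty x) hne, ?_,
    Fin.cases (show (G.induce {x}).Connected by rw [induce_singleton_eq_top]; exact connected_top)
      hconn, ?_⟩
  · intro i j hij
    cases i using Fin.cases <;> cases j using Fin.cases
    · exact absurd rfl hij
    · exact hxB _
    · exact (hxB _).symm
    · exact hdisj fun h => hij (congrArg Fin.succ h)
  · intro i j hij
    cases i using Fin.cases <;> cases j using Fin.cases
    · exact absurd rfl hij.ne
    · exact hxadj _
    · obtain ⟨u, hu, u', hu', h⟩ := hxadj _
      exact ⟨u', hu', u, hu, h.symm⟩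
    · exact hadj fun h => hij.ne (congrArg Fin.succ h)

namespace SimpleGraph

theorem isMinorModel_induce (G : SimpleGraph V) (s : Set V) :
    IsMinorModel (G.induce s) G (fun v => {v.1}) := by
  refine ⟨fun _ => Set.singleton_nonempty _, fun v w h => ?_, fun v => ?_,
    fun v w h => ⟨v, rfl, w, rfl, h⟩⟩
  · exact Set.disjoint_singleton.2 (Subtype.val_injective.ne h)
  · rw [induce_singleton_eq_top]
    exact connected_top

def contract (G : SimpleGraph V) (φ : W → Set V) : SimpleGraph W where
  Adj a b := a ≠ b ∧ ∃ u ∈ φ a, ∃ u' ∈ φ b, G.Adj u u'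
  symm := ⟨fun _ _ ⟨hab, u, hu, u', hu', h⟩ => ⟨hab.symm, u', hu', u, hu, h.symm⟩⟩
  loopless := ⟨fun _ h => h.1 rfl⟩

theorem isMinorModel_contract {G : SimpleGraph V} {φ : W → Set V} (hne : ∀ w, (φ w).Nonempty)
    (hdisj : ∀ ⦃w w'⦄, w ≠ w' → Disjoint (φ w) (φ w'))
    (hconn : ∀ w, (G.induce (φ w)).Connected) : IsMinorModel (G.contract φ) G φ :=
  ⟨hne, hdisj, hconn, fun _ _ h => h.2⟩

/-- The branch sets of the contraction of the edge `xy` onto `x`. -/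
def edgeBranch (x y : V) (a : ({y}ᶜ : Set V)) : Set V :=
  {v | v = a.1 ∨ a.1 = x ∧ v = y}

theorem isMinorModel_contract_edgeBranch {G : SimpleGraph V} {x y : V} (hxy : G.Adj x y) :
    IsMinorModel (G.contract (edgeBranch x y)) G (edgeBranch x y) := by
  refine isMinorModel_contract (fun a => ⟨a.1, Or.inl rfl⟩) (fun a b hab => ?_) (fun a => ?_)
  · have ha : a.1 ≠ y := a.2
    have hb : b.1 ≠ y := b.2
    have hab' : a.1 ≠ b.1 := Subtype.val_injective.ne hab
    refine Set.disjoint_left.2 fun v hva hvb => ?_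
    simp only [edgeBranch, Set.mem_ofPred_eq] at hva hvb
    rcases hva with rfl | ⟨hax, rfl⟩ <;> rcases hvb with h | ⟨hbx, h⟩ <;> simp_all
  · by_cases h : a.1 = x
    · have hxy' : edgeBranch x y a = {x, y} := by ext; simp [edgeBranch, h]
      rw [hxy']
      exact induce_pair_connected_of_adj hxy
    · have hx : edgeBranch x y a = {a.1} := by ext; simp [edgeBranch, h]
      rw [hx, induce_singleton_eq_top]
      exact connected_top

end SimpleGraph

theorem IsMinorOf.top_succ_of_induce_neighborSet {k : ℕ} {G : SimpleGraph V} {x : V}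
    (h : IsMinorOf (⊤ : SimpleGraph (Fin k)) (G.induce (G.neighborSet x))) :
    IsMinorOf (⊤ : SimpleGraph (Fin (k + 1))) G :=
  let ⟨_, hB⟩ := h
  ⟨_, (IsMinorModel.comp hB (isMinorModel_induce G _)).cons_of_subset_neighborSet
    fun _ => Set.iUnion₂_subset fun v _ => Set.singleton_subset_iff.2 v.2⟩

end MinorModels

namespace SimpleGraph

variable {V : Type} [Fintype V] (G : SimpleGraph V) [DecidableRel G.Adj]

theorem mul_card_le_two_mul_card_edgeFinset [DecidableEq V] {δ : ℕ} (h : ∀ v, δ ≤ G.degree v) :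
    δ * Fintype.card V ≤ 2 * #G.edgeFinset := by
  calc δ * Fintype.card V = ∑ _v, δ := by simp [mul_comm]
    _ ≤ ∑ v, G.degree v := sum_le_sum fun v _ => h v
    _ = 2 * #G.edgeFinset := sum_degrees_eq_twice_card_edges G

theorem degree_induce (s : Set V) [Fintype s] [DecidablePred (· ∈ s)] (v : s) :
    (G.induce s).degree v = #{u ∈ G.neighborFinset v | u ∈ s} := by
  rw [← card_neighborFinset_eq_degree, ← card_map (Function.Embedding.subtype _)]
  congr 1
  ext u
  simp

theorem mul_card_neighborSet_le_card_edgeFinset_induce [DecidableEq V] (x : V) {δ : ℕ}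
    (h : ∀ v, G.Adj x v → 2 * δ ≤ #(G.neighborFinset x ∩ G.neighborFinset v)) :
    δ * Fintype.card (G.neighborSet x) ≤ #(G.induce (G.neighborSet x)).edgeFinset := by
  have hdeg : ∀ v : G.neighborSet x, 2 * δ ≤ (G.induce (G.neighborSet x)).degree v :=
    fun ⟨v, hv⟩ => by
      have hcommon : {u ∈ G.neighborFinset v | u ∈ G.neighborSet x} =
          G.neighborFinset x ∩ G.neighborFinset v := by
        ext u
        simp [and_comm]
      rw [degree_induce, hcommon]
      exact h v hv
  have := mul_card_le_two_mul_card_edgeFinset _ hdeg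
  rw [mul_assoc] at this
  omega

theorem card_edgeFinset_eq_induce_compl_add_degree [DecidableEq V] (v : V) :
    #G.edgeFinset = #(G.induce {v}ᶜ).edgeFinset + G.degree v := by
  rw [card_edgeFinset_induce_compl_singleton, card_edgeFinset_deleteIncidenceSet]
  have := G.degree_le_card_edgeFinset v
  omega

theorem card_edgeFinset_le_contract_edgeBranch [DecidableEq V] {x y : V} (hxy : G.Adj x y)
    [DecidableRel (G.contract (edgeBranch x y)).Adj] :
    #G.edgeFinset ≤ #(G.contract (edgeBranch x y)).edgeFinset + 1 +
      #(G.neighborFinset x ∩ G.neighborFinset y) := by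
  set x' : ({y}ᶜ : Set V) := ⟨x, hxy.ne⟩
  -- the neighbours of `y` that become new neighbours of `x`
  set N : Finset ({y}ᶜ : Set V) := {b | G.Adj y b ∧ ¬ G.Adj x b ∧ b ≠ x'}
  have hdeg : G.degree y ≤ 1 + #(G.neighborFinset x ∩ G.neighborFinset y) + #N := by
    have hsub : G.neighborFinset y ⊆
        insert x ((G.neighborFinset x ∩ G.neighborFinset y) ∪ N.map (.subtype _)) := by
      intro u hu
      rw [mem_neighborFinset] at hu
      by_cases hux : u = x
      · simp [hux]
      by_cases hxu : G.Adj x u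
      · simp [hxu, hu]
      have huy : u ≠ y := hu.ne'
      simp [N, x', Subtype.ext_iff, hu, hxu, hux, huy]
    have := card_union_le (G.neighborFinset x ∩ G.neighborFinset y) (N.map (.subtype _))
    rw [card_map] at this
    calc G.degree y = #(G.neighborFinset y) := (card_neighborFinset_eq_degree G y).symm
      _ ≤ _ := card_le_card hsub
      _ ≤ _ := card_insert_le _ _
      _ ≤ _ := by omega
  have hle : G.induce {y}ᶜ ≤ G.contract (edgeBranch x y) := fun a b h =>
    ⟨h.ne, a, Or.inl rfl, b, Or.inl rfl, h⟩
  have hdisj : Disjoint (G.induce {y}ᶜ).edgeFinset (N.image (s(x', ·))) := by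
    refine disjoint_right.2 fun e he hmem => ?_
    obtain ⟨b, hb, rfl⟩ := mem_image.1 he
    simp only [N, mem_filter] at hb
    exact hb.2.2.1 (by simpa [x'] using hmem)
  have hsub : (G.induce {y}ᶜ).edgeFinset ∪ N.image (s(x', ·)) ⊆
      (G.contract (edgeBranch x y)).edgeFinset := by
    refine union_subset (edgeFinset_subset_edgeFinset.2 hle) fun e he => ?_
    obtain ⟨b, hb, rfl⟩ := mem_image.1 he
    simp only [N, mem_filter] at hb
    simpa using ⟨hb.2.2.2.symm, y, Or.inr ⟨rfl, rfl⟩, b, Or.inl rfl, hb.2.1⟩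
  have hcard := card_le_card hsub
  rw [card_union_of_disjoint hdisj, card_image_of_injective _ fun _ _ => Sym2.congr_right.1]
    at hcard
  have := card_edgeFinset_eq_induce_compl_add_degree G y
  omega

end SimpleGraph

theorem isMinorOf_top_of_two_pow_mul_card_le (h : ℕ) {V : Type} [Fintype V] [DecidableEq V]
    (G : SimpleGraph V) [DecidableRel G.Adj] (hpos : 0 < #G.edgeFinset)
    (hG : 2 ^ h * Fintype.card V ≤ #G.edgeFinset) : IsMinorOf (⊤ : SimpleGraph (Fin h)) G := by
  induction h generalizing V with
  | zero =>
    exact ⟨Fin.elim0, fun i => i.elim0, fun i => i.elim0, fun i => i.elim0, fun i => i.elim0⟩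
  | succ k ih =>
  induction hn : Fintype.card V using Nat.strong_induction_on generalizing V with
  | _ n ihn =>
  obtain ⟨⟨x, y⟩, hxy⟩ := card_pos.1 hpos
  rw [mem_edgeFinset, mem_edgeSet] at hxy
  by_cases hc : ∃ x y, G.Adj x y ∧ #(G.neighborFinset x ∩ G.neighborFinset y) < 2 ^ (k + 1)
  · -- contracting `xy` loses at most `2 ^ (k + 1)` edges and one vertex
    classical
    obtain ⟨x, y, hxy, hcommon⟩ := hc
    have hm : Fintype.card ({y}ᶜ : Set V) + 1 = Fintype.card V := by
      rw [Fintype.card_compl_set, Set.card_singleton]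
      have := Fintype.card_pos_iff.2 ⟨x⟩
      omega
    have hcontract := G.card_edgeFinset_le_contract_edgeBranch hxy
    have hbound : 2 ^ (k + 1) * Fintype.card ({y}ᶜ : Set V) ≤
        #(G.contract (edgeBranch x y)).edgeFinset := by
      rw [← hm, mul_add, mul_one] at hG
      omega
    have hm_pos : 0 < Fintype.card ({y}ᶜ : Set V) := Fintype.card_pos_iff.2 ⟨⟨x, hxy.ne⟩⟩
    exact (ihn _ (by omega) _ ((Nat.mul_pos (by positivity) hm_pos).trans_le hbound) hbound
      rfl).trans ⟨_, isMinorModel_contract_edgeBranch hxy⟩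
  · -- every edge lies in `2 ^ (k + 1)` triangles, so `G[N(x)]` is dense enough for `K_k`
    simp only [not_exists, not_and, not_lt] at hc
    have hedges := G.mul_card_neighborSet_le_card_edgeFinset_induce x (δ := 2 ^ k)
      fun v hv => pow_succ' 2 k ▸ hc x v hv
    have hs_pos : 0 < Fintype.card (G.neighborSet x) := Fintype.card_pos_iff.2 ⟨⟨y, hxy⟩⟩
    exact (ih _ ((Nat.mul_pos (by positivity) hs_pos).trans_le hedges) hedges)
      |>.top_succ_of_induce_neighborSet

theorem exists_card_adj_le_of_not_isMinorOf {VH V : Type} [Fintype VH] [Fintype V] [DecidableEq V]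
    {H : SimpleGraph VH} {G : SimpleGraph V} [DecidableRel G.Adj] (hG : ¬IsMinorOf H G)
    {X : Finset V} (hX : X.Nonempty) :
    ∃ x ∈ X, #{u ∈ X | G.Adj x u} ≤ 2 ^ (Fintype.card VH + 1) := by
  by_contra! hlarge
  set h := Fintype.card VH
  have hdeg : ∀ v : (X : Set V), 2 ^ (h + 1) + 1 ≤ (G.induce X).degree v := fun ⟨v, hv⟩ => by
    have hadj : {u ∈ G.neighborFinset v | u ∈ (X : Set V)} = {u ∈ X | G.Adj v u} := by
      ext u
      simp [and_comm]
    rw [degree_induce, hadj]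
    exact hlarge v hv
  have hsum := mul_card_le_two_mul_card_edgeFinset _ hdeg
  have hcard : Fintype.card (X : Set V) = #X := by simp
  rw [hcard, add_mul, one_mul, pow_succ, mul_right_comm] at hsum
  have hX_pos := hX.card_pos
  have hedges : 2 ^ h * Fintype.card (X : Set V) ≤ #(G.induce X).edgeFinset := by
    rw [hcard]
    omega
  have hpos : 0 < #(G.induce X).edgeFinset := by omega
  have hHtop : H ⊑ (⊤ : SimpleGraph (Fin h)) :=
    isContained_top_iff.2 ⟨(Fintype.equivFin VH).toEmbedding⟩
  exact hG (((isMinorOf_top_of_two_pow_mul_card_le h _ hpos hedges).trans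
    ⟨_, isMinorModel_induce G X⟩).of_isContained hHtop)

theorem SimpleGraph.Subgraph.exists_star_subset_edgeSet {V : Type} [DecidableEq V]
    {G : SimpleGraph V} (R : G.Subgraph) {x : V} {N : Finset V} {r : ℕ} (hN : R.neighborSet x ⊆ N)
    (hr : r ≤ (R.neighborSet x).ncard) :
    ∃ T ∈ N.powersetCard r, (T.image (s(x, ·)) : Set (Sym2 V)) ⊆ R.edgeSet := by
  classical
  have hcoe : ((N.filter (· ∈ R.neighborSet x) : Finset V) : Set V) = R.neighborSet x := by
    ext u
    simpa using fun hu => hN hu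
  rw [← hcoe, Set.ncard_coe_finset] at hr
  obtain ⟨T, hTN, hTr⟩ := exists_subset_card_eq hr
  refine ⟨T, mem_powersetCard.2 ⟨hTN.trans (filter_subset _ _), hTr⟩, ?_⟩
  intro e he
  obtain ⟨u, hu, rfl⟩ := by simpa using he
  exact (mem_filter.1 (hTN hu)).2

theorem exists_star_signatures {V : Type} (G : SimpleGraph V) [DecidableEq V] [DecidableRel G.Adj]
    (d r : ℕ) (hdeg : ∀ X : Finset V, X.Nonempty → ∃ x ∈ X, #{u ∈ X | G.Adj x u} ≤ d)
    (X : Finset V) :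
    ∃ C : Finset (Finset (Sym2 V)),
      (∀ S ∈ C, #S = r ∧ (S : Set (Sym2 V)) ⊆ G.edgeSet) ∧ #C ≤ d.choose r * #X ∧
      ∀ R : G.Subgraph, R.verts.Nonempty → (∀ v ∈ R.verts, r ≤ (R.neighborSet v).ncard) →
        R.verts ⊆ X → ∃ S ∈ C, (S : Set (Sym2 V)) ⊆ R.edgeSet := by
  induction X using Finset.strongInduction with
  | H X ih =>
  rcases X.eq_empty_or_nonempty with rfl | hX
  · exact ⟨∅, by simp, by simp, fun R ⟨v, hv⟩ _ hRX => by simpa using hRX hv⟩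
  obtain ⟨x, hx, hxd⟩ := hdeg X hX
  obtain ⟨C, hC, hCcard, hCR⟩ := ih (X.erase x) (erase_ssubset hx)
  set N := {u ∈ X | G.Adj x u}
  set stars := (N.powersetCard r).image fun T => T.image (s(x, ·))
  refine ⟨C ∪ stars, fun S hS => ?_, ?_, fun R hR hRdeg hRX => ?_⟩
  · rcases mem_union.1 hS with hS | hS
    · exact hC S hS
    obtain ⟨T, hT, rfl⟩ := mem_image.1 hS
    rw [mem_powersetCard] at hT
    refine ⟨(card_image_of_injective _ fun _ _ => Sym2.congr_right.1).trans hT.2, ?_⟩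
    intro e he
    obtain ⟨u, hu, rfl⟩ := by simpa using he
    exact (mem_filter.1 (hT.1 hu)).2
  · have hstars : #stars ≤ d.choose r :=
      card_image_le.trans ((card_powersetCard r N).trans_le (Nat.choose_le_choose r hxd))
    calc #(C ∪ stars) ≤ #C + #stars := card_union_le _ _
      _ ≤ d.choose r * #(X.erase x) + d.choose r := add_le_add hCcard hstars
      _ = d.choose r * #X := by rw [← mul_add_one, card_erase_add_one hx]
  · by_cases hxR : x ∈ R.verts
    · have hN : R.neighborSet x ⊆ N := fun u hu =>
        mem_filter.2 ⟨hRX (R.edge_vert (R.adj_symm hu)), R.adj_sub hu⟩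
      obtain ⟨T, hT, hTR⟩ := R.exists_star_subset_edgeSet hN (hRdeg x hxR)
      exact ⟨_, mem_union_right _ (mem_image_of_mem _ hT), hTR⟩
    · obtain ⟨S, hS, hSR⟩ := hCR R hR hRdeg fun v hv =>
        mem_erase.2 ⟨fun h => hxR (h ▸ hv), hRX hv⟩
      exact ⟨S, mem_union_left _ hS, hSR⟩

theorem stmt_16_general (r : ℕ) {VH : Type} [Fintype VH] (H : SimpleGraph VH) :
    ∃ c : ℝ, 0 < c ∧
      ∀ (V : Type) [Fintype V] (G : SimpleGraph V), ¬ IsMinorOf H G →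
        ∃ C : Finset (Finset (Sym2 V)),
          (∀ S ∈ C, S.card = r ∧ (S : Set (Sym2 V)) ⊆ G.edgeSet) ∧
          (C.card : ℝ) ≤ c * (Fintype.card V : ℝ) ∧
          ∀ R : G.Subgraph, R.verts.Nonempty →
            (∀ v ∈ R.verts, r ≤ (R.neighborSet v).ncard) →
            ∃ S ∈ C, (S : Set (Sym2 V)) ⊆ R.edgeSet := by
  classical
  set d := 2 ^ (Fintype.card VH + 1)
  refine ⟨d.choose r + 1, by positivity, fun V _ G hG => ?_⟩
  obtain ⟨C, hCedges, hCcard, hC⟩ :=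
    exists_star_signatures G d r (fun X hX => exists_card_adj_le_of_not_isMinorOf hG hX) univ
  refine ⟨C, hCedges, ?_, fun R hR hRdeg => hC R hR hRdeg (by simp)⟩
  calc (#C : ℝ) ≤ d.choose r * Fintype.card V := by exact_mod_cast hCcard
    _ ≤ (d.choose r + 1) * Fintype.card V := by gcongr; linarith

/-- Lemma 5.1 (weak general collection). -/
theorem stmt_16 (r : ℕ) (hr : 0 < r) {VH : Type} [Fintype VH] (H : SimpleGraph VH) :
    ∃ c : ℝ, 0 < c ∧
      ∀ (V : Type) [Fintype V] (G : SimpleGraph V), ¬ IsMinorOf H G →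
        ∃ C : Finset (Finset (Sym2 V)),
          (∀ S ∈ C, S.card = r ∧ (S : Set (Sym2 V)) ⊆ G.edgeSet) ∧
          (C.card : ℝ) ≤ c * (Fintype.card V : ℝ) ∧
          ∀ R : G.Subgraph, R.verts.Nonempty →
            (∀ v ∈ R.verts, r ≤ (R.neighborSet v).ncard) →
            ∃ S ∈ C, (S : Set (Sym2 V)) ⊆ R.edgeSet :=
  stmt_16_general r H
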